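/- arXiv:1811.07587 — 6 statements merged into one kernel-verified Lean document; each statement's English description precedes it below -/
import Mathlib

section
/- Let E₁ be a normed linear space and E₂ a Banach space, and let E = E₁ × E₂. Let d : E → E₂ be a continuous mapping satisfying ‖d(x₁, x₂) − d(x₁, x₂′)‖ ≤ (1/2)‖x₂ − x₂′‖ for all x₁ ∈ E₁ and x₂, x₂′ ∈ E₂. Then the mapping h : E → E defined by h(x₁, x₂) = (x₁, x₂ − d(x₁, x₂)) is a homeomorphism of E onto itself. -/
/-- The identity perturbed by a map which is a `1/2`-contraction in the second variable,
uniformly in the first, is a homeomorphism of the product space. -/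
theorem perturbed_identity_homeomorph
    {E₁ : Type*} [NormedAddCommGroup E₁] [NormedSpace ℝ E₁]
    {E₂ : Type*} [NormedAddCommGroup E₂] [NormedSpace ℝ E₂] [CompleteSpace E₂]
    (d : E₁ × E₂ → E₂) (hd : Continuous d)
    (hlip : ∀ (x₁ : E₁) (x₂ x₂' : E₂),
      ‖d (x₁, x₂) - d (x₁, x₂')‖ ≤ (1 / 2) * ‖x₂ - x₂'‖) :
    ∃ h : (E₁ × E₂) ≃ₜ (E₁ × E₂),
      ∀ x : E₁ × E₂, h x = (x.1, x.2 - d x) := by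
  have hcon : ∀ (x₁ : E₁) (y : E₂), ContractingWith (1/2) (fun z => y + d (x₁, z)) := by
    intro x₁ y
    refine ⟨one_half_lt_one, LipschitzWith.of_dist_le_mul fun a b => ?_⟩
    simp only [dist_eq_norm, add_sub_add_left_eq_sub]
    simpa using hlip x₁ a b
  set g : E₁ × E₂ → E₂ := fun p => (hcon p.1 p.2).fixedPoint _ with hgdef
  have hg : ∀ p : E₁ × E₂, g p = p.2 + d (p.1, g p) :=
    fun p => ((hcon p.1 p.2).fixedPoint_isFixedPt).symm
  -- key estimate for continuity of g
  have key : ∀ p q : E₁ × E₂,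
      ‖g p - g q‖ ≤ 2 * ‖p.2 - q.2‖ + 2 * ‖d (p.1, g q) - d (q.1, g q)‖ := by
    intro p q
    have h1 : g p - g q = (p.2 - q.2) + (d (p.1, g p) - d (p.1, g q))
        + (d (p.1, g q) - d (q.1, g q)) := by
      conv_lhs => rw [hg p, hg q]
      abel
    have h2 : ‖g p - g q‖ ≤ ‖p.2 - q.2‖ + ‖d (p.1, g p) - d (p.1, g q)‖
        + ‖d (p.1, g q) - d (q.1, g q)‖ := by
      rw [h1]
      exact norm_add₃_le
    have h3 := hlip p.1 (g p) (g q)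
    have h4 : ‖d (p.1, g p) - d (p.1, g q)‖ ≤ (1/2) * ‖g p - g q‖ := h3
    linarith
  have hgcont : Continuous g := by
    rw [continuous_iff_continuousAt]
    intro q
    rw [ContinuousAt, tendsto_iff_norm_sub_tendsto_zero]
    have hB : Continuous (fun p : E₁ × E₂ =>
        2 * ‖p.2 - q.2‖ + 2 * ‖d (p.1, g q) - d (q.1, g q)‖) := by
      fun_prop
    have hB0 : Filter.Tendsto (fun p : E₁ × E₂ =>
        2 * ‖p.2 - q.2‖ + 2 * ‖d (p.1, g q) - d (q.1, g q)‖) (nhds q) (nhds 0) := by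
      have := hB.tendsto q
      simpa using this
    exact squeeze_zero (fun p => norm_nonneg _) (fun p => key p q) hB0
  refine ⟨{ toFun := fun p => (p.1, p.2 - d p)
            invFun := fun p => (p.1, g p)
            left_inv := ?_
            right_inv := ?_
            continuous_toFun := by fun_prop
            continuous_invFun := (continuous_fst.prodMk hgcont) }, fun x => rfl⟩
  · intro p
    have : g (p.1, p.2 - d p) = p.2 := by
      refine ((hcon p.1 (p.2 - d p)).fixedPoint_unique ?_).symm
      show p.2 - d p + d (p.1, p.2) = p.2
      simp
    simp [this]
  · intro p
    exact Prod.ext rfl (sub_eq_iff_eq_add.mpr (hg p))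
end

section
/- Let E be a Banach space with a strictly convex norm ‖·‖ and a Schauder basis {eₙ} such that for every x = Σⱼ xⱼ eⱼ and every j₀, ‖Σ_{j ≠ j₀} xⱼ eⱼ‖ ≤ ‖Σⱼ xⱼ eⱼ‖. Assume the norm is Fréchet differentiable away from 0 with derivative J(w) = D‖·‖(w) for w ≠ 0. Then for every w = Σⱼ wⱼ eⱼ ∈ E \ {0} and every index j₀, if w_{j₀} ≠ 0 then ⟨J(w), e_{j₀}⟩ ≠ 0. -/
/-- In a strictly convex Banach space with a normalized Schauder basis `(e n)` which is
1-suppression unconditional (removing any one coordinate does not increase the norm),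
if the norm is Fréchet differentiable away from `0` with derivative `J w` at `w ≠ 0`,
then for every `w ≠ 0` and index `j₀`, `w_{j₀} ≠ 0` implies `⟨J w, e j₀⟩ ≠ 0`. -/
theorem deriv_norm_nonzero_of_coord_nonzero
    {E : Type*} [NormedAddCommGroup E] [NormedSpace ℝ E] [StrictConvexSpace ℝ E]
    (e : ℕ → E) (coord : ℕ → E →L[ℝ] ℝ) (J : E → E →L[ℝ] ℝ)
    (hnormalized : ∀ n, ‖e n‖ = 1)
    (hbiorth : ∀ i j, coord i (e j) = if i = j then 1 else 0)
    (hexpansion : ∀ x : E,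
      Filter.Tendsto (fun n => ∑ j ∈ Finset.range n, coord j x • e j)
        Filter.atTop (nhds x))
    (hsupp : ∀ (x : E) (j₀ : ℕ), ‖x - coord j₀ x • e j₀‖ ≤ ‖x‖)
    (hJ : ∀ w : E, w ≠ 0 → HasFDerivAt (fun y : E => ‖y‖) (J w) w) :
    ∀ (w : E), w ≠ 0 → ∀ j₀ : ℕ, coord j₀ w ≠ 0 → J w (e j₀) ≠ 0 := by
  intro w hw j₀ hc h0
  have hd := hJ w hw
  have hJw_eq : fderiv ℝ (fun y : E => ‖y‖) w = J w := hd.fderiv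
  have hJww : J w w = ‖w‖ := by
    have := hd.differentiableAt.fderiv_norm_self
    rwa [hJw_eq] at this
  have hJle : ‖J w‖ ≤ 1 := by
    have := hd.le_of_lipschitz lipschitzWith_one_norm
    simpa using this
  set c : ℝ := coord j₀ w with hcdef
  set y : E := w - c • e j₀ with hydef
  have hJwy : J w y = ‖w‖ := by
    simp [hydef, map_sub, map_smul, h0, hJww]
  have hyle : ‖y‖ ≤ ‖w‖ := hsupp w j₀
  have hwley : ‖w‖ ≤ ‖y‖ := by
    calc ‖w‖ = J w y := hJwy.symm
      _ ≤ ‖J w y‖ := Real.le_norm_self _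
      _ ≤ ‖J w‖ * ‖y‖ := (J w).le_opNorm y
      _ ≤ 1 * ‖y‖ := by
          exact mul_le_mul_of_nonneg_right hJle (norm_nonneg _)
      _ = ‖y‖ := one_mul _
  have hny : ‖y‖ = ‖w‖ := le_antisymm hyle hwley
  have hne : w ≠ y := by
    intro h
    apply hc
    have h2 : c • e j₀ = 0 := sub_eq_self.mp (hydef ▸ h).symm
    have h1 : ‖c • e j₀‖ = 0 := by rw [h2, norm_zero]
    rw [norm_smul, hnormalized, mul_one] at h1
    simpa using h1
  have hmid : ‖(1 / 2 : ℝ) • (w + y)‖ < ‖w‖ :=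
    (norm_midpoint_lt_iff (by rw [hny])).2 hne
  have hJmid : J w ((1 / 2 : ℝ) • (w + y)) = ‖w‖ := by
    rw [map_smul, map_add, hJww, hJwy, smul_eq_mul]
    ring
  have : ‖w‖ ≤ ‖(1 / 2 : ℝ) • (w + y)‖ := by
    calc ‖w‖ = J w ((1 / 2 : ℝ) • (w + y)) := hJmid.symm
      _ ≤ ‖J w ((1 / 2 : ℝ) • (w + y))‖ := Real.le_norm_self _
      _ ≤ ‖J w‖ * ‖(1 / 2 : ℝ) • (w + y)‖ := (J w).le_opNorm _
      _ ≤ 1 * ‖(1 / 2 : ℝ) • (w + y)‖ :=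
          mul_le_mul_of_nonneg_right hJle (norm_nonneg _)
      _ = _ := one_mul _
  linarith
end

section
/- Let E = W ⊕ V be a direct sum decomposition of a reflexive Banach space E with closed subspaces W and V, where the norm ‖·‖ of E is locally uniformly convex. For w ∈ W let f(w) denote the unique point v ∈ V minimizing v ↦ ‖w + v‖. Then f : W → V is continuous. -/
/-!
Write `x n = y n + p n` and `x₀ = y₀ + p₀` for the points realising the distances from `-y n`
and `-y₀` to the convex set `K`. Minimality makes the distance function `1`-Lipschitz, so
`‖x n‖ → ‖x₀‖`; testing minimality of `p₀` at the midpoint of `p₀` and `p n` gives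
`‖x₀ + x n‖ ≥ 2‖x₀‖ - ‖y₀ - y n‖`, so `‖x₀ + x n‖ → 2‖x₀‖`. Local uniform convexity then
forces `x n → x₀`, hence `p n = x n - y n → x₀ - y₀ = p₀`.
-/

open Filter Topology

def LocallyUniformConvexNorm (E : Type*) [NormedAddCommGroup E] : Prop :=
  ∀ (x₀ : E) (x : ℕ → E),
    Tendsto (fun n => 2 * (‖x₀‖ ^ 2 + ‖x n‖ ^ 2) - ‖x₀ + x n‖ ^ 2) atTop (𝓝 0) →
    Tendsto (fun n => ‖x n - x₀‖) atTop (𝓝 0)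

namespace LocallyUniformConvexNorm

variable {E : Type*} [NormedAddCommGroup E]

theorem tendsto_of_tendsto_norm (h : LocallyUniformConvexNorm E) {x₀ : E} {x : ℕ → E}
    (hnorm : Tendsto (fun n => ‖x n‖) atTop (𝓝 ‖x₀‖))
    (hadd : Tendsto (fun n => ‖x₀ + x n‖) atTop (𝓝 (2 * ‖x₀‖))) :
    Tendsto x atTop (𝓝 x₀) := by
  refine tendsto_iff_norm_sub_tendsto_zero.mpr (h x₀ x ?_)
  convert ((tendsto_const_nhds.add (hnorm.pow 2)).const_mul 2).sub (hadd.pow 2) using 2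
  ring

end LocallyUniformConvexNorm

section NearestPoint

variable {E : Type*} [NormedAddCommGroup E] {K : Set E} {y y' p q : E}

theorem norm_add_le_of_isMinOn (hp : IsMinOn (fun v => ‖y + v‖) K p) (hq : q ∈ K) :
    ‖y + p‖ ≤ ‖y' + q‖ + ‖y - y'‖ :=
  calc ‖y + p‖ ≤ ‖y + q‖ := hp hq
    _ = ‖(y' + q) + (y - y')‖ := by abel_nf
    _ ≤ ‖y' + q‖ + ‖y - y'‖ := norm_add_le _ _

theorem abs_norm_add_sub_norm_add_le_of_isMinOn (hp : IsMinOn (fun v => ‖y + v‖) K p)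
    (hq : IsMinOn (fun v => ‖y' + v‖) K q) (hpK : p ∈ K) (hqK : q ∈ K) :
    |‖y + p‖ - ‖y' + q‖| ≤ ‖y - y'‖ := by
  have h₁ := norm_add_le_of_isMinOn (y' := y') hp hqK
  have h₂ := norm_add_le_of_isMinOn (y' := y) hq hpK
  rw [norm_sub_rev] at h₂
  exact abs_sub_le_iff.mpr ⟨by linarith, by linarith⟩

variable [NormedSpace ℝ E]

theorem two_mul_norm_add_le_of_isMinOn (hK : Convex ℝ K) (hp : IsMinOn (fun v => ‖y + v‖) K p)
    (hpK : p ∈ K) (hqK : q ∈ K) :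
    2 * ‖y + p‖ ≤ ‖(y + p) + (y' + q)‖ + ‖y - y'‖ := by
  have hmid : (1 / 2 : ℝ) • p + (1 / 2 : ℝ) • q ∈ K :=
    hK hpK hqK (by norm_num) (by norm_num) (by norm_num)
  calc 2 * ‖y + p‖ ≤ 2 * ‖y + ((1 / 2 : ℝ) • p + (1 / 2 : ℝ) • q)‖ := by
        gcongr; exact hp hmid
    _ = ‖(2 : ℝ) • (y + ((1 / 2 : ℝ) • p + (1 / 2 : ℝ) • q))‖ := by
        rw [norm_smul, Real.norm_two]
    _ = ‖((y + p) + (y' + q)) + (y - y')‖ := by congr 1; module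
    _ ≤ ‖(y + p) + (y' + q)‖ + ‖y - y'‖ := norm_add_le _ _

theorem LocallyUniformConvexNorm.tendsto_of_isMinOn (h : LocallyUniformConvexNorm E)
    (hK : Convex ℝ K) {y : ℕ → E} {y₀ : E} {p : ℕ → E} {p₀ : E}
    (hy : Tendsto y atTop (𝓝 y₀)) (hpK : ∀ n, p n ∈ K) (hp₀K : p₀ ∈ K)
    (hp : ∀ n, IsMinOn (fun v => ‖y n + v‖) K (p n)) (hp₀ : IsMinOn (fun v => ‖y₀ + v‖) K p₀) :
    Tendsto p atTop (𝓝 p₀) := by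
  have hdist : Tendsto (fun n => ‖y₀ - y n‖) atTop (𝓝 0) := by
    simpa only [norm_sub_rev] using tendsto_iff_norm_sub_tendsto_zero.mp hy
  have hnorm : Tendsto (fun n => ‖y n + p n‖) atTop (𝓝 ‖y₀ + p₀‖) := by
    refine tendsto_iff_dist_tendsto_zero.mpr (squeeze_zero (fun _ => dist_nonneg) (fun n => ?_) hdist)
    rw [Real.dist_eq, abs_sub_comm]
    exact abs_norm_add_sub_norm_add_le_of_isMinOn hp₀ (hp n) hp₀K (hpK n)
  have hadd : Tendsto (fun n => ‖(y₀ + p₀) + (y n + p n)‖) atTop (𝓝 (2 * ‖y₀ + p₀‖)) := by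
    refine tendsto_of_tendsto_of_tendsto_of_le_of_le (g := fun n => 2 * ‖y₀ + p₀‖ - ‖y₀ - y n‖)
      (h := fun n => ‖y₀ + p₀‖ + ‖y n + p n‖) ?_ ?_ (fun n => ?_) (fun n => norm_add_le _ _)
    · simpa using tendsto_const_nhds.sub hdist
    · simpa [two_mul] using tendsto_const_nhds.add hnorm
    · linarith [two_mul_norm_add_le_of_isMinOn (y' := y n) hK hp₀ hp₀K (hpK n)]
  simpa using (h.tendsto_of_tendsto_norm hnorm hadd).sub hy

end NearestPoint

theorem continuity_of_nearest_point_map_general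
    {E : Type*} [NormedAddCommGroup E] [NormedSpace ℝ E]
    (hLUR : ∀ (x₀ : E) (x : ℕ → E),
      Filter.Tendsto (fun n => 2 * (‖x₀‖ ^ 2 + ‖x n‖ ^ 2) - ‖x₀ + x n‖ ^ 2)
        Filter.atTop (nhds 0) →
      Filter.Tendsto (fun n => ‖x n - x₀‖) Filter.atTop (nhds 0))
    (W V : Submodule ℝ E)
    (f : W → V)
    (hmin : ∀ w : W, ∀ v : V, ‖(w : E) + (f w : E)‖ ≤ ‖(w : E) + (v : E)‖) :
    Continuous f := by
  have hminOn (w : W) : IsMinOn (fun v => ‖(w : E) + v‖) (V : Set E) (f w) :=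
    fun v hv => hmin w ⟨v, hv⟩
  rw [continuous_iff_seqContinuous]
  intro u w₀ hu
  refine IsEmbedding.subtypeVal.tendsto_nhds_iff.mpr ?_
  exact LocallyUniformConvexNorm.tendsto_of_isMinOn hLUR V.convex
    ((continuous_subtype_val.tendsto w₀).comp hu) (fun n => (f (u n)).2) (f w₀).2
    (fun n => hminOn (u n)) (hminOn w₀)

/-- Let `E = W ⊕ V` be a topological direct sum decomposition of a reflexive Banach
space whose norm is locally uniformly convex. If `f w` is, for each `w ∈ W`, the unique
point of `V` minimizing `v ↦ ‖w + v‖`, then `f : W → V` is continuous. -/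
theorem continuity_of_nearest_point_map
    {E : Type*} [NormedAddCommGroup E] [NormedSpace ℝ E] [CompleteSpace E]
    (hrefl : Function.Surjective (NormedSpace.inclusionInDoubleDual ℝ E))
    (hLUR : ∀ (x₀ : E) (x : ℕ → E),
      Filter.Tendsto (fun n => 2 * (‖x₀‖ ^ 2 + ‖x n‖ ^ 2) - ‖x₀ + x n‖ ^ 2)
        Filter.atTop (nhds 0) →
      Filter.Tendsto (fun n => ‖x n - x₀‖) Filter.atTop (nhds 0))
    (W V : Submodule ℝ E) (hW : IsClosed (W : Set E)) (hVcl : IsClosed (V : Set E))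
    (hcompl : IsCompl W V)
    (f : W → V)
    (hmin : ∀ w : W, ∀ v : V, ‖(w : E) + (f w : E)‖ ≤ ‖(w : E) + (v : E)‖)
    (huniq : ∀ (w : W) (v : V),
      (∀ v' : V, ‖(w : E) + (v : E)‖ ≤ ‖(w : E) + (v' : E)‖) → v = f w) :
    Continuous f :=
  continuity_of_nearest_point_map_general hLUR W V f hmin
end

section
/- Let S ⊂ ℝ² be a convex body symmetric about the coordinate axes, with 0 in its interior, satisfying {−1, 1} × [−1/2, 1/2] ⊂ ∂S. Let μ_S be its Minkowski functional. Then for every point (x₀, y₀) with x₀ ≠ 0, there exists σ > 0 (one may take σ = |x₀|/4) such that μ_S(x, y) = |x| whenever max(|x − x₀|, |y|) ≤ σ. -/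
open Set

/-- Local flatness of the Minkowski functional of a "smooth square" near the `x`-axis:
if a convex body `S ⊆ ℝ²` symmetric about the coordinate axes, with `0` in its interior,
has the segments `{±1} × [-1/2, 1/2]` on its boundary, then for every `(x₀, y₀)` with
`x₀ ≠ 0` there is `σ > 0` such that `gauge S (x, y) = |x|` whenever
`max (|x - x₀|) |y| ≤ σ`. -/
theorem minkowski_functional_locally_flat
    (S : Set (ℝ × ℝ))
    (hconv : Convex ℝ S) (hclosed : IsClosed S) (hbdd : Bornology.IsBounded S)
    (h0 : (0 : ℝ × ℝ) ∈ interior S)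
    (hsym₁ : ∀ p : ℝ × ℝ, p ∈ S ↔ (-p.1, p.2) ∈ S)
    (hsym₂ : ∀ p : ℝ × ℝ, p ∈ S ↔ (p.1, -p.2) ∈ S)
    (hboundary : (({-1, 1} : Set ℝ) ×ˢ Set.Icc (-(1/2) : ℝ) (1/2)) ⊆ frontier S) :
    ∀ x₀ y₀ : ℝ, x₀ ≠ 0 →
      ∃ σ > (0 : ℝ), ∀ x y : ℝ, max |x - x₀| |y| ≤ σ → gauge S (x, y) = |x| := by
  intro x₀ y₀ hx₀
  have hS0 : S ∈ nhds (0 : ℝ × ℝ) := mem_interior_iff_mem_nhds.mp h0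
  refine ⟨|x₀| / 4, by positivity, fun x y h => ?_⟩
  have h1 : |x - x₀| ≤ |x₀| / 4 := le_trans (le_max_left _ _) h
  have h2 : |y| ≤ |x₀| / 4 := le_trans (le_max_right _ _) h
  have hx : (3 : ℝ)/4 * |x₀| ≤ |x| := by
    have := abs_sub_abs_le_abs_sub x₀ x
    rw [abs_sub_comm] at h1
    linarith
  have hxpos : (0 : ℝ) < |x| := lt_of_lt_of_le (by positivity) hx
  have hxne : x ≠ 0 := fun hx' => by simp [hx'] at hxpos
  have hy : abs (y / |x|) ≤ 1/2 := by
    rw [abs_div, abs_abs, div_le_iff₀ hxpos]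
    nlinarith [abs_pos.mpr hx₀]
  have hfr : ((x / |x|, y / |x|) : ℝ × ℝ) ∈ frontier S := by
    apply hboundary
    constructor
    · rcases lt_or_gt_of_ne hxne with h' | h'
      · simp [abs_of_neg h', div_neg, div_self (ne_of_lt h')]
      · simp [abs_of_pos h', div_self (ne_of_gt h')]
    · exact abs_le.mp hy
  have hg1 : gauge S ((x / |x|, y / |x|) : ℝ × ℝ) = 1 :=
    (gauge_eq_one_iff_mem_frontier hconv hS0).mpr hfr
  have hsmul : ((x, y) : ℝ × ℝ) = |x| • ((x / |x|, y / |x|) : ℝ × ℝ) := by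
    simp [Prod.ext_iff, smul_eq_mul, mul_div_cancel₀, ne_of_gt hxpos]
  rw [hsmul, gauge_smul_of_nonneg (abs_nonneg x), hg1, smul_eq_mul, mul_one]
end

section
/- Let E be a Banach space isomorphic to E ⊕ E, and let V be a closed subspace of E of finite codimension. Then there exists a decomposition E = E₁ ⊕ E₂ ⊕ E₃ into closed subspaces, each isomorphic to E, such that E₁ ⊕ E₂ ⊂ V. -/
/-!
Write `E ≅ (E × E) × E` and let `f : (E × E) × E → E ⧸ V` be the quotient map read through this
isomorphism, with components `a` on `E × E` and `b` on the last factor. Since `E ⧸ V` is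
finite-dimensional, `a` has a continuous generalised inverse `s` (`a s a = a`), and the kernel of
`b`, being infinite-dimensional (unless `E = 0`), contains a complemented copy `j (E ⧸ V)` of the
quotient, with continuous left inverse `π`. The shears `(x, y) ↦ (x, y - j a x)` and
`(x, y) ↦ (x + s π y, y)` are automorphisms whose composite sends `(x, 0)` to
`(x - s a x, -j a x)`, which `f` kills. The three coordinate copies of `E`, transported by the
resulting isomorphism, are the summands.
-/

open Function

theorem LinearMap.not_finiteDimensional_ker {K Y Q : Type*} [DivisionRing K] [AddCommGroup Y]
    [Module K Y] [AddCommGroup Q] [Module K Q] [FiniteDimensional K Q]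
    (hY : ¬ FiniteDimensional K Y) (b : Y →ₗ[K] Q) : ¬ FiniteDimensional K (LinearMap.ker b) := by
  intro hker
  have : FiniteDimensional K (Y ⧸ LinearMap.ker b) := b.quotKerEquivRange.symm.finiteDimensional
  exact hY (Module.Finite.of_submodule_quotient (LinearMap.ker b))

theorem ContinuousLinearMap.HasLeftInverse.nonempty_equiv_range {R E F : Type*} [Ring R]
    [TopologicalSpace E] [AddCommGroup E] [Module R E]
    [TopologicalSpace F] [AddCommGroup F] [Module R F] {f : E →L[R] F} (hf : f.HasLeftInverse) :
    Nonempty (E ≃L[R] f.range) := by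
  obtain ⟨g, hg⟩ := hf
  refine ⟨.equivOfInverse f.rangeRestrict (g ∘L f.range.subtypeL) hg ?_⟩
  rintro ⟨_, x, rfl⟩
  ext
  simp [hg x]

section FiniteDimensionalTarget

variable {𝕜 : Type*} [RCLike 𝕜]
  {X Y Q : Type*} [NormedAddCommGroup X] [NormedSpace 𝕜 X] [NormedAddCommGroup Y]
  [NormedSpace 𝕜 Y] [NormedAddCommGroup Q] [NormedSpace 𝕜 Q] [FiniteDimensional 𝕜 Q]

namespace ContinuousLinearMap

theorem exists_comp_comp_self_eq_self (a : X →L[𝕜] Q) : ∃ s : Q →L[𝕜] X, a ∘L s ∘L a = a := by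
  obtain ⟨p, hp⟩ := Submodule.ClosedComplemented.of_finiteDimensional a.range
  obtain ⟨t, ht⟩ := HasRightInverse.of_surjective_of_finiteDimensional
    (f := a.rangeRestrict) (LinearMap.surjective_rangeRestrict a.toLinearMap)
  refine ⟨t ∘L p, ext fun x => ?_⟩
  have hpa : p (a x) = a.rangeRestrict x := hp ⟨a x, LinearMap.mem_range_self _ x⟩
  simpa [hpa] using congrArg Subtype.val (ht (a.rangeRestrict x))

theorem HasLeftInverse.of_injective_of_finiteDimensional_domain {j : Q →L[𝕜] Y}
    (hj : Injective j) : j.HasLeftInverse := by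
  obtain ⟨p, hp⟩ := Submodule.ClosedComplemented.of_finiteDimensional j.range
  obtain ⟨g, hg⟩ := HasLeftInverse.of_injective_of_finiteDimensional
    (f := j.rangeRestrict) (fun _ _ h => hj (congrArg Subtype.val h))
  refine ⟨g ∘L p, fun q => ?_⟩
  have hpj : p (j q) = j.rangeRestrict q := hp ⟨j q, LinearMap.mem_range_self _ q⟩
  simpa [hpj] using hg q

theorem exists_hasLeftInverse_forall_mem (W : Submodule 𝕜 Y) (hW : ¬ FiniteDimensional 𝕜 W) :
    ∃ j : Q →L[𝕜] Y, j.HasLeftInverse ∧ ∀ q, j q ∈ W := by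
  obtain ⟨j, hj⟩ := lift_rank_le_iff_exists_linearMap.mp <|
    (Cardinal.lift_lt_aleph0.mpr (Module.rank_lt_aleph0 𝕜 Q)).le.trans <|
      Cardinal.aleph0_le_lift.mpr <| not_lt.mp (mt (Module.rank_lt_aleph0_iff (R := 𝕜)).mp hW)
  exact ⟨LinearMap.toContinuousLinearMap (W.subtype ∘ₗ j),
    HasLeftInverse.of_injective_of_finiteDimensional_domain (W.injective_subtype.comp hj),
    fun q => (j q).2⟩

end ContinuousLinearMap

open ContinuousLinearMap in
theorem exists_continuousLinearEquiv_apply_mk_zero_mem_ker (hY : ¬ FiniteDimensional 𝕜 Y)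
    (f : X × Y →L[𝕜] Q) : ∃ χ : (X × Y) ≃L[𝕜] X × Y, ∀ x, χ (x, 0) ∈ f.ker := by
  set a := f ∘L inl 𝕜 X Y
  set b := f ∘L inr 𝕜 X Y
  have hsplit (u : X) (v : Y) : f (u, v) = a u + b v := (f.comp_inl_add_comp_inr (u, v)).symm
  clear_value a b
  obtain ⟨s, hs⟩ := a.exists_comp_comp_self_eq_self
  obtain ⟨j, ⟨π, hπ⟩, hjb⟩ := exists_hasLeftInverse_forall_mem (Q := Q) b.ker
    (LinearMap.not_finiteDimensional_ker hY b.toLinearMap)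
  let g : X →L[𝕜] Y := -(j ∘L a)
  let F : Y →L[𝕜] X := s ∘L π
  refine ⟨(ContinuousLinearEquiv.skewProd (.refl 𝕜 X) (.refl 𝕜 Y) g).trans
    ((ContinuousLinearEquiv.prodComm 𝕜 X Y).trans
    ((ContinuousLinearEquiv.skewProd (.refl 𝕜 Y) (.refl 𝕜 X) F).trans
    (ContinuousLinearEquiv.prodComm 𝕜 Y X))), fun x => ?_⟩
  have hsas : a (s (a x)) = a x := congrArg (· x) hs
  have hbj : b (j (a x)) = 0 := hjb (a x)
  simp [g, F, hsplit, hπ (a x), hsas, hbj]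

theorem exists_continuousLinearEquiv_apply_mk_zero_mem {E : Type*} [NormedAddCommGroup E]
    [NormedSpace 𝕜 E] (e : E ≃L[𝕜] E × E) (V : Submodule 𝕜 E) [IsClosed (V : Set E)]
    [FiniteDimensional 𝕜 (E ⧸ V)] : ∃ χ : ((E × E) × E) ≃L[𝕜] E, ∀ p, χ (p, 0) ∈ V := by
  let ψ : ((E × E) × E) ≃L[𝕜] E := (e.symm.prodCongr (.refl 𝕜 E)).trans e.symm
  by_cases hE : FiniteDimensional 𝕜 E
  · have h := e.toLinearEquiv.finrank_eq
    rw [Module.finrank_prod] at h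
    have : Subsingleton E := Module.finrank_zero_iff.mp (by omega : Module.finrank 𝕜 E = 0)
    exact ⟨ψ, fun p => by simp [Subsingleton.elim (ψ (p, 0)) 0]⟩
  · obtain ⟨χ, hχ⟩ :=
      exists_continuousLinearEquiv_apply_mk_zero_mem_ker hE (V.mkQL ∘L ψ.toContinuousLinearMap)
    exact ⟨χ.trans ψ, fun p => (Submodule.Quotient.mk_eq_zero V).mp (hχ p)⟩

end FiniteDimensionalTarget

namespace ContinuousLinearEquiv

section Coordinates

variable {R ι E M : Type*} [Ring R] [DecidableEq ι]
  [TopologicalSpace E] [AddCommGroup E] [Module R E]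
  [TopologicalSpace M] [AddCommGroup M] [Module R M] (φ : (ι → E) ≃L[R] M)

theorem hasLeftInverse_comp_single (i : ι) :
    (φ.toContinuousLinearMap ∘L ContinuousLinearMap.single R (fun _ => E) i).HasLeftInverse :=
  ⟨ContinuousLinearMap.proj i ∘L φ.symm.toContinuousLinearMap, fun x => by simp⟩

theorem isClosed_range_comp_single [T1Space M] [IsTopologicalAddGroup M] (i : ι) :
    IsClosed ((φ.toContinuousLinearMap ∘L ContinuousLinearMap.single R (fun _ => E) i).range :
      Set M) := by
  simpa only [LinearMap.coe_range, ContinuousLinearMap.coe_coe] using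
    (φ.hasLeftInverse_comp_single i).isClosed_range

theorem nonempty_range_comp_single_equiv (i : ι) :
    Nonempty ((φ.toContinuousLinearMap ∘L ContinuousLinearMap.single R (fun _ => E) i).range ≃L[R]
      E) :=
  (φ.hasLeftInverse_comp_single i).nonempty_equiv_range.map ContinuousLinearEquiv.symm

theorem isInternal_range_comp_single [Finite ι] :
    DirectSum.IsInternal fun i =>
      (φ.toContinuousLinearMap ∘L ContinuousLinearMap.single R (fun _ => E) i).range := by
  have hmap (i : ι) : (φ.toContinuousLinearMap ∘L ContinuousLinearMap.single R (fun _ => E) i).range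
      = Submodule.orderIsoMapComap φ.toLinearEquiv (LinearMap.range (LinearMap.single R _ i)) :=
    LinearMap.range_comp _ _
  have hindep : iSupIndep fun i => LinearMap.range (LinearMap.single R (fun _ : ι => E) i) :=
    fun i => by simpa using LinearMap.disjoint_single_single R (fun _ : ι => E) {i} {i}ᶜ (by simp)
  rw [DirectSum.isInternal_submodule_iff_iSupIndep_and_iSup_eq_top, funext hmap]
  refine ⟨hindep.map_orderIso _, ?_⟩
  simp only [Submodule.orderIsoMapComap_apply]
  rw [← Submodule.map_iSup, LinearMap.iSup_range_single, Submodule.map_top]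
  exact LinearMap.range_eq_top.mpr φ.surjective

end Coordinates

section FinThree

variable (R M : Type*) [Semiring R] [AddCommMonoid M] [Module R M] [TopologicalSpace M]

def finThreeArrow : (Fin 3 → M) ≃L[R] (M × M) × M :=
  ((Fin.consEquivL R (fun _ => M)).symm.trans
    ((ContinuousLinearEquiv.refl R M).prodCongr (finTwoArrow R M))).trans
    (prodAssoc R M M M).symm

@[simp]
theorem finThreeArrow_apply (x : Fin 3 → M) : finThreeArrow R M x = ((x 0, x 1), x 2) :=
  rfl

end FinThree

end ContinuousLinearEquiv

theorem decomposition_trick_general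
    {E : Type*} [NormedAddCommGroup E] [NormedSpace ℝ E]
    (hiso : Nonempty (E ≃L[ℝ] E × E))
    (V : Submodule ℝ E) (hVcl : IsClosed (V : Set E))
    (hcodim : FiniteDimensional ℝ (E ⧸ V)) :
    ∃ E₁ E₂ E₃ : Submodule ℝ E,
      IsClosed (E₁ : Set E) ∧ IsClosed (E₂ : Set E) ∧ IsClosed (E₃ : Set E) ∧
      DirectSum.IsInternal (fun i : Fin 3 => ![E₁, E₂, E₃] i) ∧
      Nonempty (E₁ ≃L[ℝ] E) ∧ Nonempty (E₂ ≃L[ℝ] E) ∧ Nonempty (E₃ ≃L[ℝ] E) ∧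
      E₁ ⊔ E₂ ≤ V := by
  obtain ⟨e⟩ := hiso
  obtain ⟨χ, hχ⟩ := exists_continuousLinearEquiv_apply_mk_zero_mem e V
  let φ := (ContinuousLinearEquiv.finThreeArrow ℝ E).trans χ
  let piece (i : Fin 3) : Submodule ℝ E :=
    (φ.toContinuousLinearMap ∘L ContinuousLinearMap.single ℝ (fun _ => E) i).range
  refine ⟨piece 0, piece 1, piece 2, φ.isClosed_range_comp_single 0,
    φ.isClosed_range_comp_single 1, φ.isClosed_range_comp_single 2, ?_,
    φ.nonempty_range_comp_single_equiv 0, φ.nonempty_range_comp_single_equiv 1,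
    φ.nonempty_range_comp_single_equiv 2, sup_le ?_ ?_⟩
  · convert φ.isInternal_range_comp_single using 2 with i
    fin_cases i <;> rfl
  all_goals
    rintro _ ⟨x, rfl⟩
    simpa [φ] using hχ _

/-- If a Banach space `E` is isomorphic to `E ⊕ E` and `V` is a closed subspace of
finite codimension, then `E` decomposes as an internal direct sum of three closed
subspaces `E₁ ⊕ E₂ ⊕ E₃`, each isomorphic to `E`, with `E₁ ⊕ E₂ ⊆ V`. -/
theorem decomposition_trick
    {E : Type*} [NormedAddCommGroup E] [NormedSpace ℝ E] [CompleteSpace E]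
    (hiso : Nonempty (E ≃L[ℝ] E × E))
    (V : Submodule ℝ E) (hVcl : IsClosed (V : Set E))
    (hcodim : FiniteDimensional ℝ (E ⧸ V)) :
    ∃ E₁ E₂ E₃ : Submodule ℝ E,
      IsClosed (E₁ : Set E) ∧ IsClosed (E₂ : Set E) ∧ IsClosed (E₃ : Set E) ∧
      DirectSum.IsInternal (fun i : Fin 3 => ![E₁, E₂, E₃] i) ∧
      Nonempty (E₁ ≃L[ℝ] E) ∧ Nonempty (E₂ ≃L[ℝ] E) ∧ Nonempty (E₃ ≃L[ℝ] E) ∧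
      E₁ ⊔ E₂ ≤ V :=
  decomposition_trick_general hiso V hVcl hcodim
end

section
/- Suppose the Banach spaces E, F satisfy: (1) for every continuous f : E → F and every continuous δ : E → (0, ∞) there is a C¹ map φ : E → F with ‖f(x) − φ(x)‖ ≤ δ(x) and Dφ(x) surjective for all x; (2) for every C¹ map φ : E → F and continuous η : E → (0, ∞) there is a C^k map g : E → F with ‖φ(x) − g(x)‖ ≤ η(x) and ‖Dφ(x) − Dg(x)‖ ≤ η(x) for all x. Assume additionally that E is separable. Then for every continuous f : E → F and continuous ε : E → (0, ∞) there exists a C^k map g : E → F with ‖f(x) − g(x)‖ ≤ ε(x) and Dg(x) surjective for all x ∈ E. -/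
/-!
Approximate `f` within `ε/2` by a `C¹` map `φ` with surjective derivatives. Surjective
operators form an open set (a perturbation of a surjection by less than the inverse of the norm
of a controlled right inverse is still onto), so `Dφ` keeps a continuous positive distance `r`
from the non-surjective ones. A `C^k` map that is `min (ε/2) (r/2)`-close to `φ` in the `C¹`
sense then does the job.
-/

open Metric Set

lemma ContinuousLinearMap.approximatesLinearOn_univ
    {𝕜 : Type*} [NontriviallyNormedField 𝕜]
    {E : Type*} [NormedAddCommGroup E] [NormedSpace 𝕜 E]
    {F : Type*} [NormedAddCommGroup F] [NormedSpace 𝕜 F] (f g : E →L[𝕜] F) :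
    ApproximatesLinearOn g f univ ‖g - f‖₊ := by
  intro x _ y _
  simpa [map_sub, sub_sub_sub_comm] using (g - f).le_opNorm (x - y)

lemma ContinuousLinearMap.isOpen_setOf_surjective
    {𝕜 : Type*} [NontriviallyNormedField 𝕜]
    {E : Type*} [NormedAddCommGroup E] [NormedSpace 𝕜 E] [CompleteSpace E]
    {F : Type*} [NormedAddCommGroup F] [NormedSpace 𝕜 F] [CompleteSpace F] :
    IsOpen {f : E →L[𝕜] F | Function.Surjective f} := by
  refine isOpen_iff.2 fun f hf => ?_
  have hrange : f.range = ⊤ := LinearMap.range_eq_top.2 hf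
  set fsymm := f.nonlinearRightInverseOfSurjective hrange
  refine ⟨(fsymm.nnnorm : ℝ)⁻¹,
    inv_pos.2 (f.nonlinearRightInverseOfSurjective_nnnorm_pos hrange), fun g hg y => ?_⟩
  have hc : (‖g - f‖₊ : ℝ) < (fsymm.nnnorm : ℝ)⁻¹ := by simpa [dist_eq_norm] using hg
  have hopen : IsOpen (range g) := by
    simpa [image_univ] using
      (f.approximatesLinearOn_univ g).open_image fsymm isOpen_univ (Or.inr hc)
  have htop : g.range = ⊤ := by
    refine Submodule.eq_top_of_nonempty_interior' _ ⟨0, ?_⟩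
    rw [LinearMap.coe_range, ContinuousLinearMap.coe_coe, hopen.interior_eq]
    exact ⟨0, map_zero g⟩
  exact LinearMap.range_eq_top.1 htop y

lemma IsOpen.exists_continuous_pos_ball_subset
    {X : Type*} [TopologicalSpace X] {Y : Type*} [PseudoMetricSpace Y] {U : Set Y} (hU : IsOpen U)
    {A : X → Y} (hA : Continuous A) (hAU : ∀ x, A x ∈ U) :
    ∃ r : X → ℝ, Continuous r ∧ (∀ x, 0 < r x) ∧ ∀ x y, dist y (A x) < r x → y ∈ U := by
  rcases (Uᶜ).eq_empty_or_nonempty with hempty | hne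
  · exact ⟨fun _ => 1, continuous_const, fun _ => one_pos,
      fun _ y _ => compl_empty_iff.1 hempty ▸ mem_univ y⟩
  refine ⟨fun x => infDist (A x) Uᶜ, (continuous_infDist_pt _).comp hA,
    fun x => (hU.isClosed_compl.notMem_iff_infDist_pos hne).1 (not_not_intro (hAU x)),
    fun x y hy => ?_⟩
  by_contra hyU
  exact (infDist_le_dist_of_mem (x := A x) (show y ∈ Uᶜ from hyU)).not_gt
    (by rwa [dist_comm])

theorem C1_approximation_is_enough_general
    {E : Type*} [NormedAddCommGroup E] [NormedSpace ℝ E] [CompleteSpace E]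
    {F : Type*} [NormedAddCommGroup F] [NormedSpace ℝ F] [CompleteSpace F]
    (k : ℕ∞)
    (h1 : ∀ f : E → F, Continuous f →
      ∀ δ : E → ℝ, Continuous δ → (∀ x, 0 < δ x) →
      ∃ φ : E → F, ContDiff ℝ 1 φ ∧ (∀ x, ‖f x - φ x‖ ≤ δ x) ∧
        ∀ x, Function.Surjective (fderiv ℝ φ x))
    (h2 : ∀ φ : E → F, ContDiff ℝ 1 φ →
      ∀ η : E → ℝ, Continuous η → (∀ x, 0 < η x) →
      ∃ g : E → F, ContDiff ℝ k g ∧ (∀ x, ‖φ x - g x‖ ≤ η x) ∧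
        ∀ x, ‖fderiv ℝ φ x - fderiv ℝ g x‖ ≤ η x) :
    ∀ f : E → F, Continuous f →
      ∀ ε : E → ℝ, Continuous ε → (∀ x, 0 < ε x) →
      ∃ g : E → F, ContDiff ℝ k g ∧ (∀ x, ‖f x - g x‖ ≤ ε x) ∧
        ∀ x, Function.Surjective (fderiv ℝ g x) := by
  intro f hf ε hε hεpos
  obtain ⟨φ, hφ, hfφ, hφsurj⟩ :=
    h1 f hf (fun x => ε x / 2) (hε.div_const 2) (fun x => half_pos (hεpos x))
  obtain ⟨r, hr, hrpos, hball⟩ := IsOpen.exists_continuous_pos_ball_subset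
    ContinuousLinearMap.isOpen_setOf_surjective (hφ.continuous_fderiv one_ne_zero) hφsurj
  obtain ⟨g, hg, hφg, hDφg⟩ := h2 φ hφ (fun x => min (ε x / 2) (r x / 2))
    ((hε.div_const 2).min (hr.div_const 2))
    (fun x => lt_min (half_pos (hεpos x)) (half_pos (hrpos x)))
  refine ⟨g, hg, fun x => ?_, fun x => hball x _ ?_⟩
  · calc ‖f x - g x‖ ≤ ‖f x - φ x‖ + ‖φ x - g x‖ := norm_sub_le_norm_sub_add_norm_sub _ _ _
      _ ≤ ε x / 2 + ε x / 2 := add_le_add (hfφ x) ((hφg x).trans (min_le_left _ _))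
      _ = ε x := add_halves _
  · calc dist (fderiv ℝ g x) (fderiv ℝ φ x) = ‖fderiv ℝ φ x - fderiv ℝ g x‖ :=
        dist_eq_norm' _ _
      _ ≤ r x / 2 := (hDφg x).trans (min_le_right _ _)
      _ < r x := half_lt_self (hrpos x)

/-- If (1) continuous maps `E → F` can be finely approximated by `C¹` maps with
surjective derivatives, and (2) `C¹` maps can be finely approximated, together with
their derivatives, by `C^k` maps, and `E` is separable, then continuous maps `E → F`
can be finely approximated by `C^k` maps with surjective derivatives. -/
theorem C1_approximation_is_enough
    {E : Type*} [NormedAddCommGroup E] [NormedSpace ℝ E] [CompleteSpace E]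
    [TopologicalSpace.SeparableSpace E]
    {F : Type*} [NormedAddCommGroup F] [NormedSpace ℝ F] [CompleteSpace F]
    (k : ℕ∞)
    (h1 : ∀ f : E → F, Continuous f →
      ∀ δ : E → ℝ, Continuous δ → (∀ x, 0 < δ x) →
      ∃ φ : E → F, ContDiff ℝ 1 φ ∧ (∀ x, ‖f x - φ x‖ ≤ δ x) ∧
        ∀ x, Function.Surjective (fderiv ℝ φ x))
    (h2 : ∀ φ : E → F, ContDiff ℝ 1 φ →
      ∀ η : E → ℝ, Continuous η → (∀ x, 0 < η x) →
      ∃ g : E → F, ContDiff ℝ k g ∧ (∀ x, ‖φ x - g x‖ ≤ η x) ∧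
        ∀ x, ‖fderiv ℝ φ x - fderiv ℝ g x‖ ≤ η x) :
    ∀ f : E → F, Continuous f →
      ∀ ε : E → ℝ, Continuous ε → (∀ x, 0 < ε x) →
      ∃ g : E → F, ContDiff ℝ k g ∧ (∀ x, ‖f x - g x‖ ≤ ε x) ∧
        ∀ x, Function.Surjective (fderiv ℝ g x) :=
  C1_approximation_is_enough_general k h1 h2
end
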